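/- Fix τ ≥ 0. Let X be a real random variable on a probability space whose distribution is not degenerate (i.e., X is not almost surely equal to a single constant). If (β₀⁽¹⁾, β₁⁽¹⁾) and (β₀⁽²⁾, β₁⁽²⁾) are real parameter pairs such that L₀(β₀⁽¹⁾ + β₁⁽¹⁾X, (β₁⁽¹⁾)²τ²) = L₀(β₀⁽²⁾ + β₁⁽²⁾X, (β₁⁽²⁾)²τ²) almost surely, then (β₀⁽¹⁾, β₁⁽¹⁾) = (β₀⁽²⁾, β₁⁽²⁾). (Identifiability of the structural Berkson logistic model with known error variance.) -/

import Mathlib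

/-!
Realising `ξ ~ N(0, b²τ²)` as `b ζ` with `ζ ~ N(0, τ²)` gives `L0 (a + b x) (b²τ²) = E σ(a + b U)`
with `U ~ N(x, τ²)` and `σ` the sigmoid: the regression function is the Gaussian location smoothing
of the logistic curve `u ↦ σ(a + b u)`, whatever the sign of `b`.

Two logistic curves with slopes `b₂ < b₁` cross exactly once, at some `u₀`, and the Gaussian
location family, with densities `φ_x`, has monotone likelihood ratio,
`φ_{x₂}(u) φ_{x₁}(u₀) = φ_{x₁}(u) φ_{x₂}(u₀) exp ((x₂ - x₁)(u - u₀) / τ²)`.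
Hence `x ↦ E_{N(x, τ²)}[σ(a₁ + b₁ U) - σ(a₂ + b₂ U)] / φ_x(u₀)` is strictly increasing (for `τ = 0`
the smoothing is trivial and the only zero is `u₀`), so the two regression functions agree at most
at one point. With equal slopes they are strictly ordered by the intercepts. Since `X` is not a.s.
constant, the regression functions agree at two distinct values of `X`, which forces equal
parameters.
-/

open MeasureTheory ProbabilityTheory Real

/-- `L0 x v` is the smoothed logistic function: the expectation of the logistic
function `exp (x - ξ) / (1 + exp (x - ξ))` where `ξ ~ N(0, v)`. -/
noncomputable def L0 (x v : ℝ) : ℝ :=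
  ∫ t, Real.exp (x - t) / (1 + Real.exp (x - t))
    ∂(gaussianReal 0 (Real.toNNReal v))

/-- `Lk k x v` is the `k`-th partial derivative of `L0` with respect to `x`. -/
noncomputable def Lk (k : ℕ) (x v : ℝ) : ℝ :=
  iteratedDeriv k (fun y => L0 y v) x

open scoped NNReal

lemma exp_div_one_add_exp (x : ℝ) : exp x / (1 + exp x) = sigmoid x := by
  rw [sigmoid_def, exp_neg]
  field_simp
  ring

lemma L0_eq_integral_sigmoid (x v : ℝ) :
    L0 x v = ∫ t, sigmoid (x - t) ∂gaussianReal 0 v.toNNReal := by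
  simp only [L0, exp_div_one_add_exp]

lemma norm_sigmoid_le_one (x : ℝ) : ‖sigmoid x‖ ≤ 1 := by
  rw [norm_of_nonneg (sigmoid_nonneg x)]
  exact sigmoid_le_one x

lemma integrable_sigmoid_comp {α : Type*} [MeasurableSpace α] {μ : Measure α}
    [IsFiniteMeasure μ] {f : α → ℝ} (hf : Measurable f) :
    Integrable (fun t => sigmoid (f t)) μ :=
  .of_bound (by fun_prop) 1 (ae_of_all _ fun t => norm_sigmoid_le_one (f t))

lemma strictMono_integral_sigmoid_add {α : Type*} [MeasurableSpace α] {μ : Measure α}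
    [IsProbabilityMeasure μ] {f : α → ℝ} (hf : Measurable f) :
    StrictMono fun a => ∫ t, sigmoid (a + f t) ∂μ := by
  have hint (a : ℝ) : Integrable (fun t => sigmoid (a + f t)) μ :=
    integrable_sigmoid_comp (by fun_prop)
  intro a b hab
  have hpos (t : α) : 0 < sigmoid (b + f t) - sigmoid (a + f t) :=
    sub_pos.2 (sigmoid_lt (by linarith))
  rw [← sub_pos, ← integral_sub (hint b) (hint a),
    integral_pos_iff_support_of_nonneg (fun t => (hpos t).le) ((hint b).sub (hint a)),
    Function.support_eq_univ fun t => (hpos t).ne']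
  simp

lemma L0_affine_eq_integral_gaussianReal (a b x τ : ℝ) :
    L0 (a + b * x) (b ^ 2 * τ ^ 2)
      = ∫ u, sigmoid (a + b * u) ∂gaussianReal x (τ ^ 2).toNNReal := by
  have hscale : gaussianReal 0 (b ^ 2 * τ ^ 2).toNNReal
      = (gaussianReal 0 (τ ^ 2).toNNReal).map (b * ·) := by
    rw [gaussianReal_map_const_mul, mul_zero]
    congr 1
    ext
    simp [mul_nonneg, sq_nonneg]
  have hshift : gaussianReal x (τ ^ 2).toNNReal
      = (gaussianReal 0 (τ ^ 2).toNNReal).map (x - ·) := by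
    rw [gaussianReal_map_const_sub, sub_zero]
  rw [L0_eq_integral_sigmoid, hscale, hshift, integral_map (by fun_prop) (by fun_prop),
    integral_map (by fun_prop) (by fun_prop)]
  congr with t
  ring_nf

lemma gaussianPDFReal_mul_gaussianPDFReal_eq_mul_exp {v : ℝ≥0} (hv : v ≠ 0) (x₁ x₂ u u₀ : ℝ) :
    gaussianPDFReal x₂ v u * gaussianPDFReal x₁ v u₀
      = gaussianPDFReal x₁ v u * gaussianPDFReal x₂ v u₀ * exp ((x₂ - x₁) / v * (u - u₀)) := by
  have hv' : (v : ℝ) ≠ 0 := by exact_mod_cast hv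
  have hexp : -(u - x₂) ^ 2 / (2 * v) + -(u₀ - x₁) ^ 2 / (2 * v)
      = -(u - x₁) ^ 2 / (2 * v) + -(u₀ - x₂) ^ 2 / (2 * v) + (x₂ - x₁) / v * (u - u₀) := by
    field_simp
    ring
  have h := congrArg exp hexp
  simp only [exp_add] at h
  simp only [gaussianPDFReal]
  linear_combination (√(2 * π * v))⁻¹ ^ 2 * h

section SingleCrossing

variable {g : ℝ → ℝ} {u₀ C : ℝ}

lemma mul_exp_mul_sub_sub_one_pos {k : ℝ} (hk : 0 < k) (hpos : ∀ u, u₀ < u → 0 < g u) {u : ℝ}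
    (hu : u₀ < u) : 0 < g u * (exp (k * (u - u₀)) - 1) :=
  mul_pos (hpos u hu) (sub_pos.2 (one_lt_exp_iff.2 (mul_pos hk (sub_pos.2 hu))))

lemma mul_exp_mul_sub_sub_one_nonneg {k : ℝ} (hk : 0 < k) (hneg : ∀ u < u₀, g u < 0)
    (hpos : ∀ u, u₀ < u → 0 < g u) (u : ℝ) : 0 ≤ g u * (exp (k * (u - u₀)) - 1) := by
  rcases lt_trichotomy u u₀ with hu | rfl | hu
  · exact mul_nonneg_of_nonpos_of_nonpos (hneg u hu).le
      (sub_nonpos.2 (exp_le_one_iff.2 (mul_nonpos_of_nonneg_of_nonpos hk.le (sub_neg.2 hu).le)))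
  · simp
  · exact (mul_exp_mul_sub_sub_one_pos hk hpos hu).le

lemma strictMono_integral_gaussianReal_div_gaussianPDFReal {v : ℝ≥0} (hv : v ≠ 0)
    (hgm : Measurable g) (hgC : ∀ u, ‖g u‖ ≤ C)
    (hneg : ∀ u < u₀, g u < 0) (hpos : ∀ u, u₀ < u → 0 < g u) :
    StrictMono fun x => (∫ u, g u ∂gaussianReal x v) / gaussianPDFReal x v u₀ := by
  intro x₁ x₂ hx
  have hc₁ := gaussianPDFReal_pos x₁ v u₀ hv
  have hc₂ := gaussianPDFReal_pos x₂ v u₀ hv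
  have hk : 0 < (x₂ - x₁) / v := div_pos (sub_pos.2 hx) (by positivity)
  have hint (x c : ℝ) : Integrable (fun u => gaussianPDFReal x v u • g u * c) :=
    ((integrable_gaussianPDFReal x v).mul_bdd hgm.aestronglyMeasurable
      (ae_of_all _ hgC)).mul_const c
  dsimp only
  rw [div_lt_div_iff₀ hc₁ hc₂, ← sub_pos, integral_gaussianReal_eq_integral_smul hv,
    integral_gaussianReal_eq_integral_smul hv, ← integral_mul_const, ← integral_mul_const,
    ← integral_sub (hint _ _) (hint _ _)]
  have hF (u : ℝ) : gaussianPDFReal x₂ v u • g u * gaussianPDFReal x₁ v u₀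
      - gaussianPDFReal x₁ v u • g u * gaussianPDFReal x₂ v u₀
      = gaussianPDFReal x₁ v u * gaussianPDFReal x₂ v u₀
        * (g u * (exp ((x₂ - x₁) / v * (u - u₀)) - 1)) := by
    rw [smul_eq_mul, smul_eq_mul, mul_right_comm, gaussianPDFReal_mul_gaussianPDFReal_eq_mul_exp hv]
    ring
  have hFint := ((hint x₂ _).sub (hint x₁ _)).congr (ae_of_all _ hF)
  have hFnonneg (u : ℝ) := mul_nonneg (mul_nonneg (gaussianPDFReal_nonneg x₁ v u) hc₂.le)
    (mul_exp_mul_sub_sub_one_nonneg hk hneg hpos u)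
  simp only [hF]
  rw [integral_pos_iff_support_of_nonneg hFnonneg hFint]
  refine lt_of_lt_of_le ?_ (measure_mono fun u (hu : u ∈ Set.Ioi u₀) =>
    (mul_pos (mul_pos (gaussianPDFReal_pos _ _ _ hv) hc₂)
      (mul_exp_mul_sub_sub_one_pos hk hpos hu)).ne')
  simp [Real.volume_Ioi]

lemma eq_of_integral_gaussianReal_eq_zero (v : ℝ≥0) (hgm : Measurable g) (hgC : ∀ u, ‖g u‖ ≤ C)
    (hneg : ∀ u < u₀, g u < 0) (hpos : ∀ u, u₀ < u → 0 < g u) {x₁ x₂ : ℝ}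
    (h₁ : ∫ u, g u ∂gaussianReal x₁ v = 0) (h₂ : ∫ u, g u ∂gaussianReal x₂ v = 0) :
    x₁ = x₂ := by
  rcases eq_or_ne v 0 with rfl | hv
  · have hzero {x : ℝ} (hx : g x = 0) : x = u₀ := by
      rcases lt_trichotomy x u₀ with hu | hu | hu
      · exact absurd hx (hneg x hu).ne
      · exact hu
      · exact absurd hx (hpos x hu).ne'
    simp only [gaussianReal_zero_var, integral_dirac] at h₁ h₂
    rw [hzero h₁, hzero h₂]
  · exact (strictMono_integral_gaussianReal_div_gaussianPDFReal hv hgm hgC hneg hpos).injective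
      (by simp only [h₁, h₂, zero_div])

end SingleCrossing

lemma eq_of_integral_sigmoid_affine_eq_of_lt {a₁ b₁ a₂ b₂ : ℝ} (hb : b₂ < b₁) (v : ℝ≥0)
    {x₁ x₂ : ℝ}
    (h₁ : ∫ u, sigmoid (a₁ + b₁ * u) ∂gaussianReal x₁ v
      = ∫ u, sigmoid (a₂ + b₂ * u) ∂gaussianReal x₁ v)
    (h₂ : ∫ u, sigmoid (a₁ + b₁ * u) ∂gaussianReal x₂ v
      = ∫ u, sigmoid (a₂ + b₂ * u) ∂gaussianReal x₂ v) :
    x₁ = x₂ := by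
  have hint (a b x : ℝ) : Integrable (fun u => sigmoid (a + b * u)) (gaussianReal x v) :=
    integrable_sigmoid_comp (by fun_prop)
  have hzero (x : ℝ) (h : ∫ u, sigmoid (a₁ + b₁ * u) ∂gaussianReal x v
      = ∫ u, sigmoid (a₂ + b₂ * u) ∂gaussianReal x v) :
      ∫ u, sigmoid (a₁ + b₁ * u) - sigmoid (a₂ + b₂ * u) ∂gaussianReal x v = 0 := by
    rw [integral_sub (hint _ _ _) (hint _ _ _), h, sub_self]
  have hcross (u : ℝ) : a₁ + b₁ * u - (a₂ + b₂ * u) = (b₁ - b₂) * (u - (a₂ - a₁) / (b₁ - b₂)) := by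
    field_simp [(sub_pos.2 hb).ne']
    ring
  refine eq_of_integral_gaussianReal_eq_zero (u₀ := (a₂ - a₁) / (b₁ - b₂)) v (by fun_prop)
    (fun u => (norm_sub_le _ _).trans (add_le_add (norm_sigmoid_le_one _) (norm_sigmoid_le_one _)))
    (fun u hu => ?_) (fun u hu => ?_) (hzero x₁ h₁) (hzero x₂ h₂)
  · refine sub_neg.2 (sigmoid_lt (sub_neg.1 ?_))
    rw [hcross]
    exact mul_neg_of_pos_of_neg (sub_pos.2 hb) (sub_neg.2 hu)
  · refine sub_pos.2 (sigmoid_lt (sub_pos.1 ?_))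
    rw [hcross]
    exact mul_pos (sub_pos.2 hb) (sub_pos.2 hu)

theorem eq_and_eq_of_L0_affine_eq {τ a₁ b₁ a₂ b₂ x₁ x₂ : ℝ} (hx : x₁ ≠ x₂)
    (h₁ : L0 (a₁ + b₁ * x₁) (b₁ ^ 2 * τ ^ 2) = L0 (a₂ + b₂ * x₁) (b₂ ^ 2 * τ ^ 2))
    (h₂ : L0 (a₁ + b₁ * x₂) (b₁ ^ 2 * τ ^ 2) = L0 (a₂ + b₂ * x₂) (b₂ ^ 2 * τ ^ 2)) :
    a₁ = a₂ ∧ b₁ = b₂ := by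
  simp only [L0_affine_eq_integral_gaussianReal] at h₁ h₂
  rcases lt_trichotomy b₂ b₁ with hb | rfl | hb
  · exact absurd (eq_of_integral_sigmoid_affine_eq_of_lt hb _ h₁ h₂) hx
  · exact ⟨(strictMono_integral_sigmoid_add (measurable_const_mul b₂)).injective h₁, rfl⟩
  · exact absurd (eq_of_integral_sigmoid_affine_eq_of_lt hb _ h₁.symm h₂.symm) hx

lemma exists_pair_ne_of_ae_of_not_ae_eq_const {Ω : Type*} [MeasurableSpace Ω] {P : Measure Ω}
    {X : Ω → ℝ} {p : Ω → Prop} (hnd : ¬ ∃ c : ℝ, ∀ᵐ ω ∂P, X ω = c) (h : ∀ᵐ ω ∂P, p ω) :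
    ∃ ω₁ ω₂, p ω₁ ∧ p ω₂ ∧ X ω₁ ≠ X ω₂ := by
  by_contra! hc
  rcases (ae P).eq_or_neBot with hP | hP
  · exact hnd ⟨0, by simp [hP]⟩
  · obtain ⟨ω₀, hω₀⟩ := h.exists
    exact hnd ⟨X ω₀, h.mono fun ω hω => hc ω ω₀ hω hω₀⟩

theorem stmt_1_general {Ω : Type*} [MeasurableSpace Ω] (P : Measure Ω)
    (X : Ω → ℝ)
    (hnd : ¬ ∃ c : ℝ, ∀ᵐ ω ∂P, X ω = c)
    (τ : ℝ) (β₀₁ β₁₁ β₀₂ β₁₂ : ℝ)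
    (h : ∀ᵐ ω ∂P, L0 (β₀₁ + β₁₁ * X ω) (β₁₁ ^ 2 * τ ^ 2)
        = L0 (β₀₂ + β₁₂ * X ω) (β₁₂ ^ 2 * τ ^ 2)) :
    β₀₁ = β₀₂ ∧ β₁₁ = β₁₂ := by
  obtain ⟨ω₁, ω₂, h₁, h₂, hne⟩ := exists_pair_ne_of_ae_of_not_ae_eq_const hnd h
  exact eq_and_eq_of_L0_affine_eq hne h₁ h₂

/-- Identifiability of the structural Berkson logistic model with known
error variance: a nondegenerate surrogate regressor distribution suffices. -/
theorem stmt_1 {Ω : Type*} [MeasurableSpace Ω] (P : Measure Ω) [IsProbabilityMeasure P]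
    (X : Ω → ℝ) (hX : Measurable X)
    (hnd : ¬ ∃ c : ℝ, ∀ᵐ ω ∂P, X ω = c)
    (τ : ℝ) (hτ : 0 ≤ τ) (β₀₁ β₁₁ β₀₂ β₁₂ : ℝ)
    (h : ∀ᵐ ω ∂P, L0 (β₀₁ + β₁₁ * X ω) (β₁₁ ^ 2 * τ ^ 2)
        = L0 (β₀₂ + β₁₂ * X ω) (β₁₂ ^ 2 * τ ^ 2)) :
    β₀₁ = β₀₂ ∧ β₁₁ = β₁₂ :=
  stmt_1_general P X hnd τ β₀₁ β₁₁ β₀₂ β₁₂ h
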